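/- Let M be a weakly uniserial right R-module with nonzero socle. Then the socle of M is an essential submodule of M and any two simple submodules of M are isomorphic. -/
import Mathlib


def IsWeaklyUniserial (R M : Type*) [Ring R] [AddCommGroup M] [Module R M] : Prop :=
  ∀ N K : Submodule R M,
    (∃ f : N →ₗ[R] K, Function.Injective f) ∨ (∃ f : K →ₗ[R] N, Function.Injective f)

def socle (R M : Type*) [Ring R] [AddCommGroup M] [Module R M] : Submodule R M :=
  sSup {N : Submodule R M | IsSimpleModule R ↥N}

lemma simple_embed_equiv {R A B : Type*} [Ring R] [AddCommGroup A] [AddCommGroup B]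
    [Module R A] [Module R B] [IsSimpleModule R A] [IsSimpleModule R B]
    (f : A →ₗ[R] B) (hf : Function.Injective f) : Nonempty (A ≃ₗ[R] B) := by
  haveI : Nontrivial A := IsSimpleModule.nontrivial R A
  have hr : LinearMap.range f = ⊤ := by
    rcases eq_bot_or_eq_top (LinearMap.range f) with h | h
    · exfalso
      obtain ⟨a, ha⟩ := exists_ne (0 : A)
      have h0 : f a = 0 := by
        have := LinearMap.mem_range_self f a
        rw [h] at this; simpa using this
      exact ha (hf (by simpa using h0))
    · exact h
  exact ⟨LinearEquiv.ofBijective f ⟨hf, LinearMap.range_eq_top.mp hr⟩⟩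

lemma simple_ne_bot {R M : Type*} [Ring R] [AddCommGroup M] [Module R M]
    {N : Submodule R M} (hN : IsSimpleModule R ↥N) : N ≠ ⊥ := by
  intro hb
  haveI := hN
  haveI : Nontrivial ↥N := IsSimpleModule.nontrivial R ↥N
  obtain ⟨⟨x, hx⟩, ⟨y, hy⟩, hxy⟩ := this
  subst hb
  simp only [Submodule.mem_bot] at hx hy
  subst hx; subst hy
  exact hxy rfl

theorem stmt_12 {R M : Type*} [Ring R] [AddCommGroup M] [Module R M]
    (h : IsWeaklyUniserial R M) (hsoc : socle R M ≠ ⊥) :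
    (∀ K : Submodule R M, K ≠ ⊥ → socle R M ⊓ K ≠ ⊥) ∧
      (∀ S T : Submodule R M, IsSimpleModule R ↥S → IsSimpleModule R ↥T →
        Nonempty (↥S ≃ₗ[R] ↥T)) := by
  -- there exists a simple submodule
  obtain ⟨S, hS⟩ : ∃ S : Submodule R M, IsSimpleModule R ↥S := by
    by_contra hc
    push_neg at hc
    apply hsoc
    have : {N : Submodule R M | IsSimpleModule R ↥N} = ∅ := by
      ext N; simp [hc N]
    rw [socle, this, sSup_empty]
  constructor
  · intro K hK
    rcases h S K with ⟨f, hf⟩ | ⟨g, hg⟩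
    · -- S embeds in K
      haveI := hS
      set g : ↥S →ₗ[R] M := K.subtype.comp f with hgdef
      have hginj : Function.Injective g := K.injective_subtype.comp hf
      set S' := LinearMap.range g with hS'
      haveI hsimp : IsSimpleModule R ↥S' :=
        IsSimpleModule.congr (LinearEquiv.ofInjective g hginj).symm
      have h1 : S' ≤ socle R M := le_sSup hsimp
      have h2 : S' ≤ K := by
        rintro x ⟨s, rfl⟩
        exact (f s).2
      have := simple_ne_bot hsimp
      intro hb
      exact this (le_bot_iff.mp (hb ▸ le_inf h1 h2))
    · -- K embeds in S, so K is simple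
      haveI := hS
      have hr : LinearMap.range g = ⊤ := by
        rcases eq_bot_or_eq_top (LinearMap.range g) with hb | ht
        · exfalso
          apply hK
          rw [eq_bot_iff]
          intro x hx
          have : g ⟨x, hx⟩ = 0 := by
            have := LinearMap.mem_range_self g ⟨x, hx⟩
            rw [hb] at this; simpa using this
          have := hg (a₁ := ⟨x, hx⟩) (a₂ := 0) (by simpa using this)
          simpa [Submodule.mem_bot] using congrArg Subtype.val this
        · exact ht
      have e : ↥K ≃ₗ[R] ↥S := LinearEquiv.ofBijective g ⟨hg, LinearMap.range_eq_top.mp hr⟩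
      haveI : IsSimpleModule R ↥K := IsSimpleModule.congr e
      have hKle : K ≤ socle R M := le_sSup this
      intro hb
      exact hK (le_bot_iff.mp (hb ▸ le_inf hKle le_rfl))
  · intro A B hA hB
    haveI := hA; haveI := hB
    rcases h A B with ⟨f, hf⟩ | ⟨g, hg⟩
    · exact simple_embed_equiv f hf
    · exact ⟨(simple_embed_equiv g hg).some.symm⟩
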